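/- arXiv:2301.06276 — 5 statements merged into one kernel-verified Lean document; each statement's English description precedes it below -/
import Mathlib

section
/- Fix p ∈ (0, 1] and ε ∈ [0, 1], and define f_p(y) = (e^y − 1)/(e^y + (1−p)/p). Then for all y ∈ [0, ε], (1−ε)·p·y ≤ f_p(y) ≤ (1+ε)·p·y. -/
/-! Multiplying numerator and denominator by `p` writes `f_p(y) = t / (1 + t)` with
`t = p (e^y - 1)`. On `[0, 1]` we have `y ≤ e^y - 1 ≤ y + y² ≤ (1 + ε) y`; the upper bound
then follows from `t / (1 + t) ≤ t`, and the lower one from monotonicity of `t ↦ t / (1 + t)`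
together with `(1 - ε) s ≤ s / (1 + s)` for `0 ≤ s = p y ≤ ε`. -/

open Real

lemma sub_one_div_add_one_sub_div_eq {p : ℝ} (hp : p ≠ 0) (x : ℝ) :
    (x - 1) / (x + (1 - p) / p) = p * (x - 1) / (1 + p * (x - 1)) := by
  rw [← mul_div_mul_left (x - 1) _ hp]
  congr 1
  field_simp
  ring

lemma div_one_add_le_div_one_add {s t : ℝ} (hs : 0 ≤ s) (hst : s ≤ t) :
    s / (1 + s) ≤ t / (1 + t) := by
  rw [div_le_div_iff₀ (by linarith) (by linarith)]
  linarith

lemma one_sub_mul_le_div_one_add {s ε : ℝ} (hs : 0 ≤ s) (hsε : s ≤ ε) :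
    (1 - ε) * s ≤ s / (1 + s) := by
  rw [le_div_iff₀ (by linarith)]
  nlinarith [mul_nonneg hs hs]

lemma exp_sub_one_le_add_sq {y : ℝ} (hy : |y| ≤ 1) : exp y - 1 ≤ y + y ^ 2 := by
  linarith [(abs_le.mp (abs_exp_sub_one_sub_id_le hy)).2]

theorem piecewise_linear_domination_pos (p ε : ℝ) (hp : p ∈ Set.Ioc (0:ℝ) 1)
    (hε : ε ∈ Set.Icc (0:ℝ) 1) :
    ∀ y ∈ Set.Icc (0:ℝ) ε,
      (1 - ε) * p * y ≤ (Real.exp y - 1) / (Real.exp y + (1 - p) / p) ∧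
      (Real.exp y - 1) / (Real.exp y + (1 - p) / p) ≤ (1 + ε) * p * y := by
  rintro y ⟨hy0, hyε⟩
  obtain ⟨hp0, hp1⟩ := hp
  rw [sub_one_div_add_one_sub_div_eq hp0.ne']
  have hexp_lower : y ≤ exp y - 1 := by linarith [add_one_le_exp y]
  have hexp_upper : exp y - 1 ≤ (1 + ε) * y := by
    have hy1 : |y| ≤ 1 := by rw [abs_of_nonneg hy0]; linarith [hε.2]
    nlinarith [exp_sub_one_le_add_sq hy1]
  have hpy : 0 ≤ p * y := mul_nonneg hp0.le hy0
  constructor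
  · calc (1 - ε) * p * y = (1 - ε) * (p * y) := by ring
      _ ≤ p * y / (1 + p * y) := one_sub_mul_le_div_one_add hpy (by nlinarith)
      _ ≤ _ := div_one_add_le_div_one_add hpy (by gcongr)
  · calc _ ≤ p * (exp y - 1) := div_le_self (by nlinarith) (by nlinarith)
      _ ≤ p * ((1 + ε) * y) := by gcongr
      _ = (1 + ε) * p * y := by ring
end

section
/- Fix p ∈ (0, 1] and ε ∈ [0, 1], and define f_p(y) = (e^y − 1)/(e^y + (1−p)/p). Then for all y ∈ [−ε, 0], (1+ε)·p·y ≤ f_p(y) ≤ (1−ε)·p·y. -/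
/-!
Clearing the fraction, f_p(y) = p (e^y - 1) / D with D = p e^y + (1 - p), a convex combination
of e^y and 1, so e^y ≤ D ≤ 1 for y ≤ 0. As e^y - 1 ≤ 0, replacing D by e^y or by 1 gives
p (1 - e^{-y}) ≤ f_p(y) ≤ p (e^y - 1), and both ends are linearised by
|e^x - 1 - x| ≤ x² ≤ ε |x| for |x| ≤ ε ≤ 1.
-/

open Real

lemma div_le_div_of_nonpos_left {a b c : ℝ} (ha : a ≤ 0) (hb : 0 < b) (hbc : b ≤ c) :
    a / b ≤ a / c := by
  rw [div_le_div_iff₀ hb (hb.trans_le hbc)]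
  nlinarith

lemma exp_le_one_add_add_mul_abs {x ε : ℝ} (hx : |x| ≤ ε) (hε : ε ≤ 1) :
    exp x ≤ 1 + x + ε * |x| := by
  have hquad := (abs_le.mp (abs_exp_sub_one_sub_id_le (hx.trans hε))).2
  have hsq : x ^ 2 ≤ ε * |x| := by
    rw [← sq_abs, sq]
    exact mul_le_mul_of_nonneg_right hx (abs_nonneg x)
  linarith

lemma one_add_mul_le_one_sub_exp_neg {y ε : ℝ} (hy : y ∈ Set.Icc (-ε) 0) (hε : ε ≤ 1) :
    (1 + ε) * y ≤ 1 - exp (-y) := by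
  have habs : |-y| = -y := abs_of_nonneg (neg_nonneg.mpr hy.2)
  have := exp_le_one_add_add_mul_abs (x := -y) (ε := ε) (by rw [habs]; linarith [hy.1]) hε
  rw [habs] at this
  linarith

lemma exp_sub_one_le_one_sub_mul {y ε : ℝ} (hy : y ∈ Set.Icc (-ε) 0) (hε : ε ≤ 1) :
    exp y - 1 ≤ (1 - ε) * y := by
  have habs : |y| = -y := abs_of_nonpos hy.2
  have := exp_le_one_add_add_mul_abs (x := y) (ε := ε) (by rw [habs]; linarith [hy.1]) hε
  rw [habs] at this
  linarith

lemma exp_sub_one_div_exp_add_eq {p : ℝ} (hp : p ≠ 0) (y : ℝ) :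
    (exp y - 1) / (exp y + (1 - p) / p) = p * (exp y - 1) / (p * exp y + (1 - p)) := by
  field_simp

lemma exp_le_mul_exp_add_one_sub {p y : ℝ} (hp : p ≤ 1) (hy : y ≤ 0) :
    exp y ≤ p * exp y + (1 - p) := by
  nlinarith [exp_le_one_iff.mpr hy]

lemma mul_exp_add_one_sub_le_one {p y : ℝ} (hp : 0 ≤ p) (hy : y ≤ 0) :
    p * exp y + (1 - p) ≤ 1 := by
  nlinarith [exp_le_one_iff.mpr hy]

theorem piecewise_linear_domination_neg (p ε : ℝ) (hp : p ∈ Set.Ioc (0:ℝ) 1)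
    (hε : ε ∈ Set.Icc (0:ℝ) 1) :
    ∀ y ∈ Set.Icc (-ε) (0:ℝ),
      (1 + ε) * p * y ≤ (Real.exp y - 1) / (Real.exp y + (1 - p) / p) ∧
      (Real.exp y - 1) / (Real.exp y + (1 - p) / p) ≤ (1 - ε) * p * y := by
  intro y hy
  rw [exp_sub_one_div_exp_add_eq hp.1.ne']
  have hnum : p * (exp y - 1) ≤ 0 :=
    mul_nonpos_of_nonneg_of_nonpos hp.1.le (by linarith [exp_le_one_iff.mpr hy.2])
  have hD_lower := exp_le_mul_exp_add_one_sub hp.2 hy.2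
  constructor
  · calc (1 + ε) * p * y = p * ((1 + ε) * y) := by ring
      _ ≤ p * (1 - exp (-y)) :=
        mul_le_mul_of_nonneg_left (one_add_mul_le_one_sub_exp_neg hy hε.2) hp.1.le
      _ = p * (exp y - 1) / exp y := by rw [exp_neg]; field_simp
      _ ≤ p * (exp y - 1) / (p * exp y + (1 - p)) :=
        div_le_div_of_nonpos_left hnum (exp_pos y) hD_lower
  · calc p * (exp y - 1) / (p * exp y + (1 - p)) ≤ p * (exp y - 1) / 1 :=
          div_le_div_of_nonpos_left hnum ((exp_pos y).trans_le hD_lower)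
            (mul_exp_add_one_sub_le_one hp.1.le hy.2)
      _ ≤ p * ((1 - ε) * y) := by
        rw [div_one]
        exact mul_le_mul_of_nonneg_left (exp_sub_one_le_one_sub_mul hy hε.2) hp.1.le
      _ = (1 - ε) * p * y := by ring
end

section
/- Let K ≥ 2, let r ∈ [0,1]^K with a unique maximizing index a*, and let Δ = r(a*) − max_{a ≠ a*} r(a) > 0 be the reward gap. Then for any probability vector π on {1,…,K}, ∑_{i=1}^K π(i)² · |r(i) − π·r|³ ≥ (Δ/(K−1)) · π(a*)² · (r(a*) − π·r)². -/
/-!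
Write `m = π ⬝ᵥ r` and let `M` bound the rewards off `a`. If `m ≤ M`, the gap `r a - M` is at
most `r a - m`, so the `a`-th summand alone dominates. If `m > M`, every other arm lies at least
`δ = m - M` below `m`; since `∑ b, π b (m - r b) = 0`, the weighted deviation `π a (r a - m)` equals
the sum of the other `π b (m - r b)`, and Cauchy–Schwarz over these `card ι - 1` terms, together
with `(m - r b)³ ≥ δ (m - r b)²`, controls the `δ`-part of the gap.
-/

open Finset Matrix

namespace StochasticNL

lemma mul_sq_le_abs_pow_three {d x : ℝ} (h : d ≤ x) : d * x ^ 2 ≤ |x| ^ 3 :=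
  calc d * x ^ 2 ≤ |x| * x ^ 2 := by gcongr; exact h.trans (le_abs_self x)
    _ = |x| ^ 3 := by rw [← sq_abs]; ring

variable {ι : Type*} [Fintype ι] {π r : ι → ℝ} {a : ι} {M : ℝ}

lemma one_le_card_sub_one [Nontrivial ι] : (1 : ℝ) ≤ Fintype.card ι - 1 := by
  have : (2 : ℝ) ≤ Fintype.card ι := by exact_mod_cast Fintype.one_lt_card (α := ι)
  linarith

lemma gap_mul_sq_le_sum_of_le {c : ℝ} (hc : c ≤ M) :
    (r a - M) * π a ^ 2 * (r a - c) ^ 2 ≤ ∑ i, π i ^ 2 * |r i - c| ^ 3 :=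
  calc (r a - M) * π a ^ 2 * (r a - c) ^ 2 = π a ^ 2 * ((r a - M) * (r a - c) ^ 2) := by ring
    _ ≤ π a ^ 2 * |r a - c| ^ 3 := by
      gcongr
      exact mul_sq_le_abs_pow_three (by linarith)
    _ ≤ ∑ i, π i ^ 2 * |r i - c| ^ 3 :=
      single_le_sum (f := fun i ↦ π i ^ 2 * |r i - c| ^ 3) (fun i _ ↦ by positivity) (mem_univ a)

variable [DecidableEq ι]

lemma sum_erase_mul_dotProduct_sub (hπ1 : ∑ i, π i = 1) :
    ∑ b ∈ univ.erase a, π b * (π ⬝ᵥ r - r b) = π a * (r a - π ⬝ᵥ r) := by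
  have htotal : ∑ b, π b * (π ⬝ᵥ r - r b) = 0 := by
    simp only [mul_sub, sum_sub_distrib, ← sum_mul, hπ1, one_mul, dotProduct, sub_self]
  rw [← add_sum_erase _ _ (mem_univ a)] at htotal
  linarith

lemma sq_mul_sub_dotProduct_le (hπ1 : ∑ i, π i = 1) :
    (π a * (r a - π ⬝ᵥ r)) ^ 2 ≤
      (Fintype.card ι - 1) * ∑ b ∈ univ.erase a, (π b * (π ⬝ᵥ r - r b)) ^ 2 := by
  have hcard : ((univ.erase a).card : ℝ) = Fintype.card ι - 1 := by
    rw [card_erase_of_mem (mem_univ a), card_univ, Nat.cast_sub (Fintype.card_pos_iff.2 ⟨a⟩)]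
    simp
  rw [← sum_erase_mul_dotProduct_sub hπ1, ← hcard]
  exact sq_sum_le_card_mul_sum_sq

lemma gap_mul_sq_le_card_sub_one_mul_sum_of_lt [Nontrivial ι] (hπ1 : ∑ i, π i = 1)
    (hM : ∀ b ≠ a, r b ≤ M) (hlt : M < π ⬝ᵥ r) :
    (r a - M) * π a ^ 2 * (r a - π ⬝ᵥ r) ^ 2 ≤
      (Fintype.card ι - 1) * ∑ i, π i ^ 2 * |r i - π ⬝ᵥ r| ^ 3 := by
  set m := π ⬝ᵥ r
  have hcube : (m - M) * ∑ b ∈ univ.erase a, (π b * (m - r b)) ^ 2 ≤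
      ∑ b ∈ univ.erase a, π b ^ 2 * |r b - m| ^ 3 := by
    rw [mul_sum]
    refine sum_le_sum fun b hb ↦ ?_
    calc (m - M) * (π b * (m - r b)) ^ 2 = π b ^ 2 * ((m - M) * (m - r b) ^ 2) := by ring
      _ ≤ π b ^ 2 * |r b - m| ^ 3 := by
        rw [abs_sub_comm]
        gcongr
        exact mul_sq_le_abs_pow_three (by linarith [hM b (ne_of_mem_erase hb)])
  have hself : π a ^ 2 * ((r a - m) * (r a - m) ^ 2) ≤ π a ^ 2 * |r a - m| ^ 3 := by
    gcongr
    exact mul_sq_le_abs_pow_three le_rfl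
  have hCS := mul_le_mul_of_nonneg_left (sq_mul_sub_dotProduct_le (r := r) (a := a) hπ1)
    (sub_pos.2 hlt).le
  calc (r a - M) * π a ^ 2 * (r a - m) ^ 2
        = π a ^ 2 * ((r a - m) * (r a - m) ^ 2) + (m - M) * (π a * (r a - m)) ^ 2 := by ring
    _ ≤ (Fintype.card ι - 1) * (π a ^ 2 * |r a - m| ^ 3) +
          (Fintype.card ι - 1) * ∑ b ∈ univ.erase a, π b ^ 2 * |r b - m| ^ 3 := by
      refine add_le_add (hself.trans (le_mul_of_one_le_left (by positivity) one_le_card_sub_one))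
        (hCS.trans ?_)
      rw [mul_left_comm]
      gcongr
      linarith [one_le_card_sub_one (ι := ι)]
    _ = (Fintype.card ι - 1) * ∑ i, π i ^ 2 * |r i - m| ^ 3 := by
      rw [← mul_add, add_sum_erase univ (fun i ↦ π i ^ 2 * |r i - m| ^ 3) (mem_univ a)]

theorem gap_mul_sq_le_card_sub_one_mul_sum [Nontrivial ι] (hπ1 : ∑ i, π i = 1)
    (hM : ∀ b ≠ a, r b ≤ M) :
    (r a - M) * π a ^ 2 * (r a - π ⬝ᵥ r) ^ 2 ≤
      (Fintype.card ι - 1) * ∑ i, π i ^ 2 * |r i - π ⬝ᵥ r| ^ 3 := by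
  rcases le_or_gt (π ⬝ᵥ r) M with hle | hlt
  · exact (gap_mul_sq_le_sum_of_le hle).trans
      (le_mul_of_one_le_left (sum_nonneg fun i _ ↦ by positivity) one_le_card_sub_one)
  · exact gap_mul_sq_le_card_sub_one_mul_sum_of_lt hπ1 hM hlt

end StochasticNL

open StochasticNL

theorem stochastic_NL_inequality (K : ℕ) (hK : 2 ≤ K) (r π : Fin K → ℝ)
    (astar : Fin K)
    (hπ1 : ∑ i, π i = 1)
    (Δ : ℝ)
    (hΔ : Δ = r astar - (Finset.univ.erase astar).sup'
      (by
        rw [Finset.erase_nonempty (Finset.mem_univ astar),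
          ← Finset.one_lt_card_iff_nontrivial]
        simpa using (show 1 < K by omega)) r) :
    ∑ i, (π i) ^ 2 * |r i - ∑ j, π j * r j| ^ 3 ≥
      (Δ / (K - 1)) * (π astar) ^ 2 * (r astar - ∑ j, π j * r j) ^ 2 := by
  have : Nontrivial (Fin K) := Fin.nontrivial_iff_two_le.mpr hK
  have hK1 : (0 : ℝ) < K - 1 := by
    have : (2 : ℝ) ≤ K := by exact_mod_cast hK
    linarith
  have hne : (univ.erase astar).Nonempty := (univ_nontrivial_iff.2 this).erase_nonempty
  have key := gap_mul_sq_le_card_sub_one_mul_sum (r := r) (π := π)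
    (M := (univ.erase astar).sup' hne r) hπ1 fun b hb ↦ le_sup' r (mem_erase.2 ⟨hb, mem_univ b⟩)
  rw [Fintype.card_fin, ← hΔ] at key
  rw [ge_iff_le, div_mul_eq_mul_div, div_mul_eq_mul_div, div_le_iff₀ hK1]
  simpa only [dotProduct, mul_comm _ ((K : ℝ) - 1)] using key
end

section
/- Let θ, θ' ∈ ℝ^K and let π_θ = softmax(θ). For any fixed action a, the map θ ↦ π_θ(a) is 3/2-smooth: |π_{θ'}(a) − π_θ(a) − ⟨∇_θ π_θ(a), θ' − θ⟩| ≤ (3/4)·‖θ' − θ‖₂². -/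
/-- Softmax policy on `K` actions. -/
noncomputable def softmax {K : ℕ} (θ : Fin K → ℝ) (a : Fin K) : ℝ :=
  Real.exp (θ a) / ∑ j, Real.exp (θ j)

/-!
Restrict to the line `t ↦ θ + t • d` with `d = θ' - θ` and let `π = softmax (θ + t • d)`.
Then `f t = π a` has `f' = π a * (d a - m)` and `f'' = π a * ((d a - m) ^ 2 - V)`, where `m` and
`V` are the mean and variance of `d` under `π`. Since `π a * (d a - m) ^ 2` is one term of `V` and
`V ≤ ∑ j, π j * d j ^ 2 ≤ ‖d‖²`, we get `|f''| ≤ ‖d‖²`, and Taylor's formula with integral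
remainder bounds `|f 1 - f 0 - f' 0|` by `‖d‖² / 2 ≤ (3 / 4) ‖d‖²`.
-/

open Finset

theorem abs_sub_sub_deriv_le_of_abs_deriv2_le {f f' f'' : ℝ → ℝ} {C : ℝ}
    (hf : ∀ t, HasDerivAt f (f' t) t) (hf' : ∀ t, HasDerivAt f' (f'' t) t)
    (hC : ∀ t, |f'' t| ≤ C) :
    |f 1 - f 0 - f' 0| ≤ C / 2 := by
  have hcont : Continuous f' := continuous_iff_continuousAt.2 fun t => (hf' t).continuousAt
  have hlip : ∀ t ∈ Set.Icc (0 : ℝ) 1, |f' t - f' 0| ≤ C * t := fun t ht => by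
    simpa using norm_image_sub_le_of_norm_deriv_le_segment'
      (fun x _ => (hf' x).hasDerivWithinAt) (fun x _ => hC x) t ht
  have hftc : f 1 - f 0 - f' 0 = ∫ t in (0 : ℝ)..1, (f' t - f' 0) := by
    rw [intervalIntegral.integral_sub (hcont.intervalIntegrable 0 1) intervalIntegrable_const,
      intervalIntegral.integral_eq_sub_of_hasDerivAt (fun t _ => hf t)
        (hcont.intervalIntegrable 0 1)]
    simp
  calc |f 1 - f 0 - f' 0|
      ≤ ∫ t in (0 : ℝ)..1, C * t := by
        rw [hftc]
        exact intervalIntegral.norm_integral_le_of_norm_le (f := fun t => f' t - f' 0)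
          (g := fun t => C * t) zero_le_one
          (Filter.Eventually.of_forall fun t ht => hlip t (Set.Ioc_subset_Icc_self ht))
          ((continuous_const.mul continuous_id).intervalIntegrable 0 1)
    _ = C / 2 := by rw [intervalIntegral.integral_const_mul, integral_id]; ring

theorem sum_mul_sub_sq_eq {ι : Type*} [Fintype ι] {w : ι → ℝ} (hw : ∑ i, w i = 1)
    (d : ι → ℝ) :
    ∑ i, w i * (d i - ∑ j, w j * d j) ^ 2 = ∑ i, w i * d i ^ 2 - (∑ j, w j * d j) ^ 2 := by
  set m := ∑ j, w j * d j
  have hexpand : ∀ i, w i * (d i - m) ^ 2 = w i * d i ^ 2 - 2 * m * (w i * d i) + m ^ 2 * w i :=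
    fun i => by ring
  simp only [hexpand, sum_add_distrib, sum_sub_distrib, ← mul_sum, hw]
  ring

theorem abs_mul_sq_sub_variance_le {ι : Type*} [Fintype ι] {w : ι → ℝ}
    (hw0 : ∀ i, 0 ≤ w i) (hw : ∑ i, w i = 1) (d : ι → ℝ) (a : ι) :
    |w a * ((d a - ∑ j, w j * d j) ^ 2 - (∑ j, w j * d j ^ 2 - (∑ j, w j * d j) ^ 2))| ≤
      ∑ j, d j ^ 2 := by
  set m := ∑ j, w j * d j
  set V := ∑ j, w j * d j ^ 2 - m ^ 2
  have hwa : w a ≤ 1 := hw ▸ single_le_sum (fun i _ => hw0 i) (mem_univ a)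
  have hVa : w a * (d a - m) ^ 2 ≤ V := by
    have hvar : ∑ i, w i * (d i - m) ^ 2 = V := sum_mul_sub_sq_eq hw d
    rw [← hvar]
    exact single_le_sum (f := fun i => w i * (d i - m) ^ 2)
      (fun i _ => mul_nonneg (hw0 i) (sq_nonneg _)) (mem_univ a)
  have hVle : V ≤ ∑ j, d j ^ 2 := by
    have : ∑ j, w j * d j ^ 2 ≤ ∑ j, d j ^ 2 :=
      sum_le_sum fun j _ => mul_le_of_le_one_left (sq_nonneg _)
        (hw ▸ single_le_sum (fun i _ => hw0 i) (mem_univ j))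
    nlinarith [sq_nonneg m]
  have hV0 : 0 ≤ V := (mul_nonneg (hw0 a) (sq_nonneg _)).trans hVa
  rw [abs_le]
  constructor <;> nlinarith [mul_nonneg (hw0 a) (sq_nonneg (d a - m)), hw0 a]

section Softmax

variable {K : ℕ}

theorem softmax_nonneg (θ : Fin K → ℝ) (i : Fin K) : 0 ≤ softmax θ i :=
  div_nonneg (Real.exp_pos _).le (sum_nonneg fun _ _ => (Real.exp_pos _).le)

theorem sum_softmax [NeZero K] (θ : Fin K → ℝ) : ∑ i, softmax θ i = 1 := by
  simp only [softmax]
  rw [← sum_div, div_self]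
  exact (sum_pos (fun _ _ => Real.exp_pos _) univ_nonempty).ne'

theorem sum_softmax_mul_indicator_sub (θ d : Fin K → ℝ) (a : Fin K) :
    ∑ j, softmax θ a * ((if j = a then (1 : ℝ) else 0) - softmax θ j) * d j =
      softmax θ a * (d a - ∑ j, softmax θ j * d j) := by
  simp [mul_sub, sub_mul, sum_sub_distrib, mul_sum, mul_assoc]

theorem hasDerivAt_softmax_line (θ d : Fin K → ℝ) (i : Fin K) (t : ℝ) :
    HasDerivAt (fun s => softmax (θ + s • d) i)
      (softmax (θ + t • d) i * (d i - ∑ j, softmax (θ + t • d) j * d j)) t := by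
  have hexp : ∀ j, HasDerivAt (fun s => Real.exp (θ j + s * d j))
      (Real.exp (θ j + t * d j) * d j) t :=
    fun j => ((hasDerivAt_mul_const (d j)).const_add (θ j)).exp
  have hpos : 0 < ∑ j, Real.exp (θ j + t * d j) :=
    sum_pos (fun _ _ => Real.exp_pos _) ⟨i, mem_univ i⟩
  have hfun : (fun s => softmax (θ + s • d) i) =
      fun s => Real.exp (θ i + s * d i) / ∑ j, Real.exp (θ j + s * d j) := by
    funext s
    simp [softmax]
  rw [hfun]
  refine ((hexp i).div (HasDerivAt.fun_sum fun j _ => hexp j) hpos.ne').congr_deriv ?_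
  simp only [softmax, Pi.add_apply, Pi.smul_apply, smul_eq_mul, div_mul_eq_mul_div, ← sum_div]
  field_simp

theorem hasDerivAt_softmax_mean_line [NeZero K] (θ d : Fin K → ℝ) (t : ℝ) :
    HasDerivAt (fun s => ∑ j, softmax (θ + s • d) j * d j)
      (∑ j, softmax (θ + t • d) j * d j ^ 2 - (∑ j, softmax (θ + t • d) j * d j) ^ 2) t := by
  refine (HasDerivAt.fun_sum fun j _ =>
    (hasDerivAt_softmax_line θ d j t).mul_const (d j)).congr_deriv ?_
  set m := ∑ j, softmax (θ + t • d) j * d j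
  have hterm : ∀ j, softmax (θ + t • d) j * (d j - m) * d j =
      softmax (θ + t • d) j * d j ^ 2 - m * (softmax (θ + t • d) j * d j) := fun j => by ring
  simp only [hterm, sum_sub_distrib, ← mul_sum]
  ring

theorem hasDerivAt_deriv_softmax_line [NeZero K] (θ d : Fin K → ℝ) (a : Fin K) (t : ℝ) :
    HasDerivAt (fun s => softmax (θ + s • d) a * (d a - ∑ j, softmax (θ + s • d) j * d j))
      (softmax (θ + t • d) a * ((d a - ∑ j, softmax (θ + t • d) j * d j) ^ 2 -
        (∑ j, softmax (θ + t • d) j * d j ^ 2 - (∑ j, softmax (θ + t • d) j * d j) ^ 2))) t := by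
  refine ((hasDerivAt_softmax_line θ d a t).mul
    ((hasDerivAt_softmax_mean_line θ d t).const_sub (d a))).congr_deriv ?_
  ring

end Softmax

theorem softmax_smoothness_general (K : ℕ) (θ θ' : Fin K → ℝ) (a : Fin K) :
    |softmax θ' a - softmax θ a -
        ∑ j, softmax θ a * ((if j = a then (1:ℝ) else 0) - softmax θ j) * (θ' j - θ j)| ≤
      (3 / 4) * ∑ j, (θ' j - θ j) ^ 2 := by
  have : NeZero K := ⟨a.pos.ne'⟩
  have key := abs_sub_sub_deriv_le_of_abs_deriv2_le (hasDerivAt_softmax_line θ (θ' - θ) a)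
    (hasDerivAt_deriv_softmax_line θ (θ' - θ) a)
    fun t => abs_mul_sq_sub_variance_le (softmax_nonneg _) (sum_softmax _) _ a
  simp only [zero_smul, add_zero, one_smul, add_sub_cancel] at key
  rw [← sum_softmax_mul_indicator_sub] at key
  have hsq : 0 ≤ ∑ j, (θ' j - θ j) ^ 2 := sum_nonneg fun _ _ => sq_nonneg _
  exact key.trans (by simp only [Pi.sub_apply]; linarith)

theorem softmax_smoothness (K : ℕ) (hK : 0 < K) (θ θ' : Fin K → ℝ) (a : Fin K) :
    |softmax θ' a - softmax θ a -
        ∑ j, softmax θ a * ((if j = a then (1:ℝ) else 0) - softmax θ j) * (θ' j - θ j)| ≤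
      (3 / 4) * ∑ j, (θ' j - θ j) ^ 2 :=
  softmax_smoothness_general K θ θ' a
end

section
/- Consider softmax NPG without baseline under repeated sampling of a fixed action a: θ_{t+1}(a) = θ_t(a) + η·r(a)/π_{θ_t}(a) and θ_{t+1}(a') = θ_t(a') for a' ≠ a, with η > 0 and r(a) > 0. Then 1 − π_{θ_t}(a) ≤ C·e^{−η·r(a)·t} for some constant C > 0 depending only on θ_1, η, r(a). -/
/-!
Under the update only the coordinate `θ_t(a)` moves, and since `π_{θ_t}(a) ≤ 1` it grows by at
least `η r(a)` per step. Writing `S = ∑_{j ≠ a} exp θ_1(j)`, which is constant in time,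
`1 - π_{θ_t}(a) = S / (exp θ_t(a) + S) ≤ S exp(-θ_t(a))`, and the linear growth of `θ_t(a)`
turns this into the rate `exp(-η r(a) t)`.
-/

open Finset Real

section Softmax

variable {K : ℕ} (θ : Fin K → ℝ) (a : Fin K)

theorem sum_exp_eq_exp_add_sum_erase :
    ∑ j, exp (θ j) = exp (θ a) + ∑ j ∈ univ.erase a, exp (θ j) :=
  (add_sum_erase _ _ (mem_univ a)).symm

theorem softmax_pos : 0 < softmax θ a := by
  unfold softmax
  rw [sum_exp_eq_exp_add_sum_erase θ a]
  positivity

theorem softmax_le_one : softmax θ a ≤ 1 := by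
  unfold softmax
  rw [sum_exp_eq_exp_add_sum_erase θ a, div_le_one (by positivity)]
  exact le_add_of_nonneg_right (sum_nonneg fun j _ => (exp_pos _).le)

theorem one_sub_softmax_le :
    1 - softmax θ a ≤ (∑ j ∈ univ.erase a, exp (θ j)) * exp (-θ a) := by
  set S := ∑ j ∈ univ.erase a, exp (θ j)
  have hS : 0 ≤ S := sum_nonneg fun j _ => (exp_pos _).le
  have hE := exp_pos (θ a)
  calc 1 - softmax θ a = S / (exp (θ a) + S) := by
        rw [softmax, sum_exp_eq_exp_add_sum_erase θ a]
        field_simp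
        ring
    _ ≤ S / exp (θ a) := div_le_div_of_nonneg_left hS hE (le_add_of_nonneg_right hS)
    _ = S * exp (-θ a) := by rw [exp_neg, div_eq_mul_inv]

end Softmax

theorem eq_of_succ_eq {α : Type*} {x : ℕ → α} {m : ℕ} (hx : ∀ t, m ≤ t → x (t + 1) = x t) :
    ∀ t, m ≤ t → x t = x m := by
  intro t ht
  induction t, ht using Nat.le_induction with
  | base => rfl
  | succ n hn ih => rw [hx n hn, ih]

theorem add_mul_sub_le_of_add_le_succ {x : ℕ → ℝ} {m : ℕ} {c : ℝ}
    (hx : ∀ t, m ≤ t → x t + c ≤ x (t + 1)) : ∀ t, m ≤ t → x m + c * (t - m) ≤ x t := by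
  intro t ht
  induction t, ht using Nat.le_induction with
  | base => simp
  | succ n hn ih =>
    push_cast
    linarith [hx n hn]

theorem npg_aggressiveness_general (K : ℕ) (θ : ℕ → Fin K → ℝ)
    (a : Fin K) (η : ℝ) (hη : 0 < η) (r : Fin K → ℝ) (hr : 0 < r a)
    (hupd : ∀ t, 1 ≤ t → θ (t + 1) a = θ t a + η * r a / softmax (θ t) a)
    (hfix : ∀ t, 1 ≤ t → ∀ a', a' ≠ a → θ (t + 1) a' = θ t a') :
    ∃ C : ℝ, 0 < C ∧ ∀ t : ℕ, 1 ≤ t →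
      1 - softmax (θ t) a ≤ C * Real.exp (-(η * r a) * t) := by
  set S := ∑ j ∈ univ.erase a, exp (θ 1 j)
  have hS : 0 ≤ S := sum_nonneg fun j _ => (exp_pos _).le
  have hrest : ∀ t, 1 ≤ t → ∑ j ∈ univ.erase a, exp (θ t j) = S := fun t ht =>
    sum_congr rfl fun j hj => by
      rw [eq_of_succ_eq (x := (θ · j)) (fun n hn => hfix n hn j (ne_of_mem_erase hj)) t ht]
  have hstep : ∀ t, 1 ≤ t → θ t a + η * r a ≤ θ (t + 1) a := fun t ht => by
    rw [hupd t ht]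
    gcongr
    exact le_div_self (mul_pos hη hr).le (softmax_pos _ a) (softmax_le_one _ a)
  have hgrow : ∀ t, 1 ≤ t → θ 1 a + η * r a * (t - 1) ≤ θ t a := by
    simpa only [Nat.cast_one] using add_mul_sub_le_of_add_le_succ (x := (θ · a)) hstep
  refine ⟨(S + 1) * exp (η * r a - θ 1 a), by positivity, fun t ht => ?_⟩
  calc 1 - softmax (θ t) a ≤ S * exp (-θ t a) := hrest t ht ▸ one_sub_softmax_le (θ t) a
    _ ≤ (S + 1) * exp ((η * r a - θ 1 a) + -(η * r a) * t) := by
        gcongr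
        · linarith
        · linarith [hgrow t ht]
    _ = (S + 1) * exp (η * r a - θ 1 a) * exp (-(η * r a) * t) := by rw [exp_add, mul_assoc]

theorem npg_aggressiveness (K : ℕ) (hK : 0 < K) (θ : ℕ → Fin K → ℝ)
    (a : Fin K) (η : ℝ) (hη : 0 < η) (r : Fin K → ℝ) (hr : 0 < r a)
    (hupd : ∀ t, 1 ≤ t → θ (t + 1) a = θ t a + η * r a / softmax (θ t) a)
    (hfix : ∀ t, 1 ≤ t → ∀ a', a' ≠ a → θ (t + 1) a' = θ t a') :
    ∃ C : ℝ, 0 < C ∧ ∀ t : ℕ, 1 ≤ t →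
      1 - softmax (θ t) a ≤ C * Real.exp (-(η * r a) * t) :=
  npg_aggressiveness_general K θ a η hη r hr hupd hfix
end
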